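/- arXiv:2408.03148 — 3 statements merged into one kernel-verified Lean document; each statement's English description precedes it below -/
import Mathlib

section
/- Let Ω ⊂ ℝ² be a bounded Lipschitz domain, f ∈ L²(Ω), u ∈ H¹₀(Ω) the weak solution of (∇u, ∇v)_Ω = (f, v)_Ω for all v ∈ H¹₀(Ω), and let G ∈ L²(Ω; ℝ²). Then ‖∇u − G‖²_Ω = inf_{s ∈ H¹₀(Ω)} ‖G − ∇s‖²_Ω + (sup over v ∈ H¹₀(Ω) with ‖∇v‖_Ω = 1 of (f, v)_Ω − (G, ∇v)_Ω)². -/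
open scoped RealInnerProductSpace

/-- Generalised Prager–Synge identity.  `X` plays the role of `H¹₀(Ω)` equipped with the
inner product `(∇·,∇·)_Ω`, `M` plays the role of `L²(Ω; ℝ²)`, and `grad : X →ₗᵢ[ℝ] M`
is the (isometric) weak-gradient map `v ↦ ∇v` (so `‖∇v‖_Ω = ‖v‖_X`).  The weak solution
`u` of the Poisson problem satisfies `(∇u, ∇v)_Ω = (f, v)_Ω =: F v` for all `v`.
Then for every `G ∈ L²(Ω; ℝ²)`,
`‖∇u − G‖² = inf_{s} ‖G − ∇s‖² + (sup_{‖∇v‖=1} (f,v) − (G,∇v))²`. -/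
theorem stmt1
    {X M : Type*} [NormedAddCommGroup X] [InnerProductSpace ℝ X] [CompleteSpace X]
    [NormedAddCommGroup M] [InnerProductSpace ℝ M] [CompleteSpace M]
    (grad : X →ₗᵢ[ℝ] M) (F : X →L[ℝ] ℝ) (u : X)
    (hu : ∀ v : X, ⟪grad u, grad v⟫ = F v) (G : M) :
    ‖grad u - G‖ ^ 2 =
      (⨅ s : X, ‖G - grad s‖ ^ 2) +
      (⨆ v : {v : X // ‖v‖ = 1}, (F v - ⟪G, grad (v : X)⟫)) ^ 2 := by
  set K : Submodule ℝ M := LinearMap.range grad.toLinearMap with hK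
  have hKset : (K : Set M) = Set.range grad := by
    rw [hK, LinearMap.coe_range]; rfl
  have hKc : IsComplete (K : Set M) := by
    rw [hKset]; exact grad.isometry.isUniformInducing.isComplete_range
  haveI : CompleteSpace K := hKc.completeSpace_coe
  set p : M := (K.orthogonalProjectionOnto G : M) with hp
  have hpmem : p ∈ K := Submodule.coe_mem _
  set w : M := grad u - p with hw
  have hgu : grad u ∈ K := ⟨u, rfl⟩
  have hwmem : w ∈ K := K.sub_mem hgu hpmem
  have hperp : G - p ∈ Kᗮ := by
    have := K.sub_starProjection_mem_orthogonal G; rwa [K.starProjection_apply] at this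
  have hin0 : ∀ m ∈ K, ⟪m, G - p⟫ = 0 := fun m hm =>
    (Submodule.mem_orthogonal K (G - p)).mp hperp m hm
  -- decomposition of the LHS
  have hdecomp : grad u - G = w - (G - p) := by rw [hw]; abel
  have hLHS : ‖grad u - G‖ ^ 2 = ‖w‖ ^ 2 + ‖G - p‖ ^ 2 := by
    rw [hdecomp, norm_sub_sq_real, hin0 w hwmem]; ring
  -- infimum
  have hinf : (⨅ s : X, ‖G - grad s‖ ^ 2) = ‖G - p‖ ^ 2 := by
    obtain ⟨s₀, hs₀⟩ := id hpmem
    have hs₀' : grad s₀ = p := hs₀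
    apply le_antisymm
    · have := ciInf_le (f := fun s : X => ‖G - grad s‖ ^ 2)
        ⟨0, fun x ⟨s, hs⟩ => hs ▸ by positivity⟩ s₀
      simpa [hs₀'] using this
    · refine le_ciInf fun s => ?_
      have hdec : G - grad s = (G - p) + (p - grad s) := by abel
      have hmem : p - grad s ∈ K := K.sub_mem hpmem ⟨s, rfl⟩
      have : ⟪G - p, p - grad s⟫ = 0 := by
        rw [real_inner_comm]; exact hin0 _ hmem
      rw [hdec, norm_add_sq_real, this]
      nlinarith [sq_nonneg ‖p - grad s‖, norm_nonneg (p - grad s)]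
  -- supremum
  have hval : ∀ v : X, F v - ⟪G, grad v⟫ = ⟪w, grad v⟫ := by
    intro v
    have h1 : ⟪grad u - G, grad v⟫ = F v - ⟪G, grad v⟫ := by
      rw [inner_sub_left, hu v]
    have h2 : ⟪grad u - G, grad v⟫ = ⟪w, grad v⟫ - ⟪G - p, grad v⟫ := by
      rw [hdecomp, inner_sub_left]
    have h3 : ⟪G - p, grad v⟫ = 0 := by
      rw [real_inner_comm]; exact hin0 _ ⟨v, rfl⟩
    rw [← h1, h2, h3, sub_zero]
  have hsup : (⨆ v : {v : X // ‖v‖ = 1}, (F v - ⟪G, grad (v : X)⟫)) = ‖w‖ := by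
    by_cases hw0 : w = 0
    · have : ∀ v : {v : X // ‖v‖ = 1}, F v - ⟪G, grad (v : X)⟫ = 0 := by
        intro v; rw [hval, hw0, inner_zero_left]
      by_cases hne : Nonempty {v : X // ‖v‖ = 1}
      · simp [this, hw0, ciSup_const]
      · rw [iSup, Set.range_eq_empty_iff.mpr (not_nonempty_iff.mp hne)]
        simp [hw0, Real.sSup_empty]
    · obtain ⟨x, hx⟩ := id hwmem
      have hx' : grad x = w := hx
      have hxne : x ≠ 0 := by
        intro h; apply hw0; rw [← hx', h]; simp
      have hxnorm : ‖x‖ = ‖w‖ := by rw [← hx']; exact (grad.norm_map x).symm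
      set v₀ : X := ‖x‖⁻¹ • x with hv₀
      have hv₀norm : ‖v₀‖ = 1 := by
        rw [hv₀, norm_smul, norm_inv, norm_norm, inv_mul_cancel₀ (norm_ne_zero_iff.mpr hxne)]
      have hval₀ : ⟪w, grad v₀⟫ = ‖w‖ := by
        rw [hv₀, grad.map_smul, real_inner_smul_right, ← hx', real_inner_self_eq_norm_sq, hx',
          hxnorm]
        have : ‖w‖ ≠ 0 := norm_ne_zero_iff.mpr hw0
        field_simp
      haveI : Nonempty {v : X // ‖v‖ = 1} := ⟨⟨v₀, hv₀norm⟩⟩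
      have hbdd : BddAbove (Set.range fun v : {v : X // ‖v‖ = 1} =>
          F (v : X) - ⟪G, grad (v : X)⟫) := by
        refine ⟨‖w‖, ?_⟩
        rintro y ⟨v, rfl⟩
        dsimp only
        rw [hval]
        calc ⟪w, grad (v : X)⟫ ≤ ‖w‖ * ‖grad (v : X)‖ := real_inner_le_norm _ _
        _ = ‖w‖ := by rw [grad.norm_map, v.2, mul_one]
      apply le_antisymm
      · refine ciSup_le fun v => ?_
        rw [hval]
        calc ⟪w, grad (v : X)⟫ ≤ ‖w‖ * ‖grad (v : X)‖ := real_inner_le_norm _ _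
        _ = ‖w‖ := by rw [grad.norm_map, v.2, mul_one]
      · have := le_ciSup (f := fun v : {v : X // ‖v‖ = 1} => F (v : X) - ⟪G, grad (v : X)⟫)
          hbdd (⟨v₀, hv₀norm⟩ : {v : X // ‖v‖ = 1})
        rw [hval, hval₀] at this
        exact this
  rw [hLHS, hinf, hsup]; ring
end

section
/- Let Ω be a bounded Lipschitz domain, u the weak solution of the Poisson problem with right-hand side f ∈ L²(Ω), and G ∈ L²(Ω; ℝ²). Then ‖∇u − G‖²_Ω ≤ inf_{s ∈ H¹₀(Ω)} ‖G − ∇s‖²_Ω + inf_{σ ∈ H(div,Ω), div σ = f} ‖G + σ‖²_Ω. -/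
open scoped RealInnerProductSpace

/-- Prager–Synge combined with the duality bound for the flux term.  `X` models
`H¹₀(Ω)` with the gradient inner product, `M` models `L²(Ω; ℝ²)`, `grad` the weak
gradient, `F v = (f, v)_Ω`, and `u` is the weak solution of the Poisson problem.
For every `σ ∈ H(div, Ω)` with `div σ = f` weakly (i.e. `(σ, ∇v) = −(f, v)` ∀ v),
`‖∇u − G‖² ≤ inf_{s ∈ H¹₀(Ω)} ‖G − ∇s‖² + ‖G + σ‖²`;
in particular the bound holds with the infimum over all such σ. -/
theorem stmt3
    {X M : Type*} [NormedAddCommGroup X] [InnerProductSpace ℝ X] [CompleteSpace X]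
    [NormedAddCommGroup M] [InnerProductSpace ℝ M] [CompleteSpace M]
    (grad : X →ₗᵢ[ℝ] M) (F : X →L[ℝ] ℝ) (u : X)
    (hu : ∀ v : X, ⟪grad u, grad v⟫ = F v) (G : M) :
    ∀ σ : M, (∀ v : X, ⟪σ, grad v⟫ = -(F v)) →
      ‖grad u - G‖ ^ 2 ≤ (⨅ s : X, ‖G - grad s‖ ^ 2) + ‖G + σ‖ ^ 2 := by
  intro σ hσ
  set R : Submodule ℝ M := LinearMap.range grad.toLinearMap with hR
  set K : Submodule ℝ M := R.topologicalClosure with hK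
  haveI : CompleteSpace K := R.isClosed_topologicalClosure.completeSpace_coe
  have hRK : R ≤ K := R.le_topologicalClosure
  have hmem : ∀ v : X, grad v ∈ K := fun v => hRK ⟨v, rfl⟩
  have hKorth : Kᗮ = Rᗮ := by
    rw [hK, ← R.orthogonal_orthogonal_eq_closure, Submodule.triorthogonal_eq_orthogonal]
  -- grad u + σ is orthogonal to K
  have hw : grad u + σ ∈ Kᗮ := by
    rw [hKorth]
    intro x hx
    obtain ⟨v, rfl⟩ := hx
    have : ⟪grad u + σ, grad v⟫ = 0 := by
      rw [inner_add_left, hu, hσ]; ring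
    simpa [real_inner_comm] using this
  -- Pythagoras
  have hpyth := Submodule.norm_sq_eq_add_norm_sq_projection (grad u - G) K
  -- bound the K-component by ‖G + σ‖
  have h1 : ‖Submodule.orthogonalProjectionOnto K (grad u - G)‖ ≤ ‖G + σ‖ := by
    have hdecomp : grad u - G = (grad u + σ) - (G + σ) := by abel
    have : Submodule.orthogonalProjectionOnto K (grad u - G) = -(Submodule.orthogonalProjectionOnto K (G + σ)) := by
      rw [hdecomp, map_sub, Submodule.orthogonalProjectionOnto_apply_of_mem_orthogonal hw,
        zero_sub]
    rw [this, norm_neg]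
    calc ‖Submodule.orthogonalProjectionOnto K (G + σ)‖ ≤ ‖Submodule.orthogonalProjectionOnto K‖ * ‖G + σ‖ :=
          (Submodule.orthogonalProjectionOnto K).le_opNorm _
      _ ≤ 1 * ‖G + σ‖ := by
          exact mul_le_mul_of_nonneg_right (Submodule.orthogonalProjectionOnto_norm_le K) (norm_nonneg _)
      _ = ‖G + σ‖ := one_mul _
  -- bound the orthogonal component by ‖G - grad s‖ for each s
  have h2 : ∀ s : X, ‖Submodule.orthogonalProjectionOnto Kᗮ (grad u - G)‖ ≤ ‖G - grad s‖ := by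
    intro s
    have hg : Submodule.orthogonalProjectionOnto Kᗮ (grad u) = 0 :=
      Submodule.orthogonalProjectionOnto_apply_of_mem_orthogonal
        (K.le_orthogonal_orthogonal (hmem u))
    have hs : Submodule.orthogonalProjectionOnto Kᗮ (grad s) = 0 :=
      Submodule.orthogonalProjectionOnto_apply_of_mem_orthogonal
        (K.le_orthogonal_orthogonal (hmem s))
    have heq : Submodule.orthogonalProjectionOnto Kᗮ (grad u - G) = -(Submodule.orthogonalProjectionOnto Kᗮ (G - grad s)) := by
      rw [map_sub, hg, zero_sub, map_sub, hs, sub_zero]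
    rw [heq, norm_neg]
    calc ‖Submodule.orthogonalProjectionOnto Kᗮ (G - grad s)‖ ≤ ‖Submodule.orthogonalProjectionOnto Kᗮ‖ * ‖G - grad s‖ :=
          (Submodule.orthogonalProjectionOnto Kᗮ).le_opNorm _
      _ ≤ 1 * ‖G - grad s‖ := by
          exact mul_le_mul_of_nonneg_right (Submodule.orthogonalProjectionOnto_norm_le Kᗮ) (norm_nonneg _)
      _ = ‖G - grad s‖ := one_mul _
  have h2' : ‖Submodule.orthogonalProjectionOnto Kᗮ (grad u - G)‖ ^ 2 ≤ ⨅ s : X, ‖G - grad s‖ ^ 2 :=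
    le_ciInf fun s => by
      have := h2 s
      nlinarith [norm_nonneg (Submodule.orthogonalProjectionOnto Kᗮ (grad u - G)),
        norm_nonneg ((G : M) - grad s)]
  have h1' : ‖Submodule.orthogonalProjectionOnto K (grad u - G)‖ ^ 2 ≤ ‖G + σ‖ ^ 2 := by
    nlinarith [norm_nonneg (Submodule.orthogonalProjectionOnto K (grad u - G)), norm_nonneg ((G : M) + σ)]
  calc ‖grad u - G‖ ^ 2
      = ‖Submodule.orthogonalProjectionOnto K (grad u - G)‖ ^ 2
        + ‖Submodule.orthogonalProjectionOnto Kᗮ (grad u - G)‖ ^ 2 := hpyth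
    _ ≤ ‖G + σ‖ ^ 2 + (⨅ s : X, ‖G - grad s‖ ^ 2) := add_le_add h1' h2'
    _ = (⨅ s : X, ‖G - grad s‖ ^ 2) + ‖G + σ‖ ^ 2 := add_comm _ _
end

section
/- Let K ⊂ ℝ² be a bounded open set, V a finite-dimensional subspace of H¹(K), Π : V → P a linear orthogonal projection onto a finite-dimensional subspace P ⊆ H¹(K) characterised by (∇(v − Πv), ∇q)_K = 0 for all q ∈ P, and S : V × V → ℝ a symmetric bilinear form. Suppose 𝒮 : V → P satisfies (∇𝒮(φ), ∇q)_K = S((I − Π)φ, q) for all q ∈ P and θ : V → H(div, K) satisfies, for each φ ∈ V, (θ(φ), ∇v)_K = S((I − Π)φ, v) for all v ∈ V. Then for all φ, v ∈ V, a(φ, v) := (∇Πφ, ∇Πv)_K + S((I − Π)φ, (I − Π)v) equals (∇(Πφ − 𝒮(φ)) + θ(φ), ∇v)_K. -/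
open scoped RealInnerProductSpace

/-- Abstract rewriting of the VEM bilinear form as a generalised gradient form
(Theorem 3.4).  `W` models `H¹(K)`, `M` models `L²(K; ℝ²)`, `grad : W →ₗ M` the
gradient, `V ⊆ W` the (finite-dimensional) virtual element space, `P ⊆ W` the
polynomial space, `π` the energy projection onto `P` (orthogonal for the gradient
inner product), `S` the symmetric stabilisation, `lift` (`𝒮`) the stabilisation
potential lifting with values in `P`, and `θ` the stabilisation flux lifting.
Then for all `φ, v ∈ V`,
`(∇πφ, ∇πv) + S((I−π)φ, (I−π)v) = (∇(πφ − 𝒮φ) + θφ, ∇v)`. -/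
theorem stmt11
    {W M : Type*} [AddCommGroup W] [Module ℝ W]
    [NormedAddCommGroup M] [InnerProductSpace ℝ M] [CompleteSpace M]
    (grad : W →ₗ[ℝ] M)
    (V P : Submodule ℝ W) [FiniteDimensional ℝ V] [FiniteDimensional ℝ P]
    (π : W →ₗ[ℝ] W)
    (hπmem : ∀ v ∈ V, π v ∈ P)
    (hπorth : ∀ v ∈ V, ∀ q ∈ P, ⟪grad (v - π v), grad q⟫ = 0)
    (S : W →ₗ[ℝ] W →ₗ[ℝ] ℝ) (hSsym : ∀ a b : W, S a b = S b a)
    (lift : W →ₗ[ℝ] W)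
    (hliftmem : ∀ φ ∈ V, lift φ ∈ P)
    (hlift : ∀ φ ∈ V, ∀ q ∈ P, ⟪grad (lift φ), grad q⟫ = S (φ - π φ) q)
    (θ : W → M)
    (hθ : ∀ φ ∈ V, ∀ v ∈ V, ⟪θ φ, grad v⟫ = S (φ - π φ) v) :
    ∀ φ ∈ V, ∀ v ∈ V,
      ⟪grad (π φ), grad (π v)⟫ + S (φ - π φ) (v - π v) =
        ⟪grad (π φ - lift φ) + θ φ, grad v⟫ := by
  intro φ hφ v hv
  have hπφP := hπmem φ hφ
  have hπvP := hπmem v hv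
  have hliftP := hliftmem φ hφ
  have h1 : ⟪grad (v - π v), grad (π φ)⟫ = 0 := hπorth v hv _ hπφP
  have h2 : ⟪grad (v - π v), grad (lift φ)⟫ = 0 := hπorth v hv _ hliftP
  have h3 : ⟪grad (lift φ), grad (π v)⟫ = S (φ - π φ) (π v) := hlift φ hφ _ hπvP
  have h4 : ⟪θ φ, grad v⟫ = S (φ - π φ) v := hθ φ hφ v hv
  have e1 : ⟪grad (π φ), grad v⟫ = ⟪grad (π φ), grad (π v)⟫ := by
    have h := h1
    simp only [map_sub, inner_sub_left] at h
    have c1 := real_inner_comm (grad v) (grad (π φ))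
    have c2 := real_inner_comm (grad (π v)) (grad (π φ))
    linarith
  have e2 : ⟪grad (lift φ), grad v⟫ = S (φ - π φ) (π v) := by
    have h := h2
    simp only [map_sub, inner_sub_left] at h
    have c1 := real_inner_comm (grad v) (grad (lift φ))
    have c2 := real_inner_comm (grad (π v)) (grad (lift φ))
    linarith
  rw [inner_add_left, h4, map_sub grad, inner_sub_left, e1, e2]
  have hs : S (φ - π φ) (v - π v) = S (φ - π φ) v - S (φ - π φ) (π v) := map_sub _ _ _
  linarith
end
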